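/- arXiv:2209.02312 — 2 statements merged into one kernel-verified Lean document; each statement's English description precedes it below -/
import Mathlib

section
/- For every k ≥ 1, the matrix H_{4k}(-1) is congruent to Γ_{2k} ⊕ Γ_{2k}; that is, there exists an invertible P ∈ ℂ^{4k×4k} with Pᵀ H_{4k}(-1) P = Γ_{2k} ⊕ Γ_{2k}. -/
open Matrix

/-- The `k×k` upper Jordan block `J_k(μ)`. -/
def Jblock (k : ℕ) (μ : ℂ) : Matrix (Fin k) (Fin k) ℂ :=
  Matrix.of fun i j : Fin k =>
    if (j : ℕ) = (i : ℕ) then μ else if (j : ℕ) = (i : ℕ) + 1 then 1 else 0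

/-- The Type-II block `H_{2k}(μ) = [[0, I_k], [J_k(μ), 0]]`. -/
def H (k : ℕ) (μ : ℂ) : Matrix (Fin k ⊕ Fin k) (Fin k ⊕ Fin k) ℂ :=
  Matrix.fromBlocks 0 1 (Jblock k μ) 0

/-- The canonical Type-I block `Γ_k`: its `(i,j)` entry (1-indexed) equals `(-1)^(k-i)` when
`i + j = k + 1` or `i + j = k + 2`, and `0` otherwise. -/
def Gamma (k : ℕ) : Matrix (Fin k) (Fin k) ℂ :=
  Matrix.of fun i j : Fin k =>
    if (i : ℕ) + (j : ℕ) + 1 = k ∨ (i : ℕ) + (j : ℕ) = k then (-1 : ℂ) ^ (k - 1 - (i : ℕ)) else 0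

namespace H4kAux

/-- Scalar entries of the Jordan-basis matrix `W`. -/
noncomputable def wf : ℕ → ℕ → ℂ := fun i t =>
  if t = 0 then (if i = 0 then 1 else 0)
  else if i = 0 then 0 else (-1) ^ i * ((t - 1).choose (i - 1)) / 2 ^ t

lemma wf_rec (a t : ℕ) :
    (-2 : ℂ) * wf (a + 1) t = if t = 0 then 0 else wf a (t - 1) - wf (a + 1) (t - 1) := by
  rcases t with _ | s
  · simp [wf]
  · simp only [Nat.succ_ne_zero, if_false, Nat.add_sub_cancel]
    rcases s with _ | r
    · rcases a with _ | b <;> simp [wf] <;> norm_num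
    · rcases a with _ | b
      · simp [wf]
        norm_num [pow_succ]
        ring
      · simp only [wf, Nat.succ_ne_zero, if_false, Nat.add_sub_cancel, Nat.succ_sub_one]
        rw [Nat.choose_succ_succ]
        push_cast
        field_simp
        ring

lemma wf_zero {i t : ℕ} (h : t < i) : wf i t = 0 := by
  rcases t with _ | s
  · simp [wf]; omega
  · have hi : i ≠ 0 := by omega
    simp [wf, hi, Nat.choose_eq_zero_of_lt (show s < i - 1 by omega)]

lemma sum_delta {m : ℕ} (c : ℕ) (g : Fin m → ℂ) :
    (∑ l : Fin m, if (l : ℕ) = c then g l else 0) = if h : c < m then g ⟨c, h⟩ else 0 := by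
  split_ifs with h
  · rw [Finset.sum_eq_single (⟨c, h⟩ : Fin m)]
    · simp
    · intro b _ hb
      exact if_neg fun hc => hb (Fin.ext hc)
    · simp
  · refine Finset.sum_eq_zero fun l _ => if_neg fun hc => h ?_
    exact hc ▸ l.isLt

lemma sq_neg_one (a : ℕ) : (-1 : ℂ) ^ a * (-1) ^ a = 1 := by
  rw [← pow_add]
  exact Even.neg_one_pow ⟨a, rfl⟩

/-- Explicit inverse of `Gamma`. -/
def Dm (m : ℕ) : Matrix (Fin m) (Fin m) ℂ :=
  Matrix.of fun i j : Fin m => if (i : ℕ) + (j : ℕ) < m then (-1 : ℂ) ^ (i : ℕ) else 0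

lemma GD (m : ℕ) : Gamma m * Dm m = 1 := by
  ext i j
  have hi := i.isLt
  have hj := j.isLt
  rw [Matrix.mul_apply]
  have step : ∀ l : Fin m,
      Gamma m i l * Dm m l j =
        (if (l : ℕ) = m - 1 - (i : ℕ) then (-1 : ℂ) ^ (m - 1 - (i : ℕ)) * Dm m l j else 0) +
        (if (l : ℕ) = m - (i : ℕ) then (-1 : ℂ) ^ (m - 1 - (i : ℕ)) * Dm m l j else 0) := by
    intro l
    have hl := l.isLt
    simp only [Gamma, Matrix.of_apply]
    split_ifs <;> first | ring1 | (exfalso; omega)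
  rw [Finset.sum_congr rfl (fun l _ => step l), Finset.sum_add_distrib, sum_delta, sum_delta]
  rw [dif_pos (show m - 1 - (i : ℕ) < m by omega)]
  simp only [Dm, Matrix.of_apply, Matrix.one_apply, Fin.ext_iff]
  have hadj : (-1 : ℂ) ^ (m - 1 - (i : ℕ)) * (-1) ^ (m - (i : ℕ)) = -1 := by
    rw [show m - (i : ℕ) = (m - 1 - (i : ℕ)) + 1 by omega, pow_succ, ← mul_assoc,
      sq_neg_one]
    ring
  rcases Nat.eq_zero_or_pos (i : ℕ) with h0 | h0
  · rw [dif_neg (by omega)]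
    split_ifs <;>
      first
        | (exfalso; omega)
        | ring1
        | linear_combination sq_neg_one (m - 1 - (i : ℕ))
        | linear_combination sq_neg_one (m - 1 - (i : ℕ)) + hadj
        | linear_combination hadj
  · rw [dif_pos (show m - (i : ℕ) < m by omega)]
    split_ifs <;>
      first
        | (exfalso; omega)
        | ring1
        | linear_combination sq_neg_one (m - 1 - (i : ℕ))
        | linear_combination sq_neg_one (m - 1 - (i : ℕ)) + hadj
        | linear_combination hadj

/-- Explicit inverse of the Jordan block `J_m(-1)`. -/
def Jim (m : ℕ) : Matrix (Fin m) (Fin m) ℂ :=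
  Matrix.of fun i j : Fin m => if (i : ℕ) ≤ (j : ℕ) then -1 else 0

lemma JJi (m : ℕ) : Jblock m (-1) * Jim m = 1 := by
  ext i j
  have hi := i.isLt
  have hj := j.isLt
  rw [Matrix.mul_apply]
  have step : ∀ l : Fin m,
      Jblock m (-1) i l * Jim m l j =
        (if (l : ℕ) = (i : ℕ) then -Jim m l j else 0) +
        (if (l : ℕ) = (i : ℕ) + 1 then Jim m l j else 0) := by
    intro l
    have hl := l.isLt
    simp only [Jblock, Matrix.of_apply]
    split_ifs <;> first | ring1 | (exfalso; omega)
  rw [Finset.sum_congr rfl (fun l _ => step l), Finset.sum_add_distrib, sum_delta, sum_delta]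
  rw [dif_pos hi]
  simp only [Jim, Matrix.of_apply, Matrix.one_apply, Fin.ext_iff]
  by_cases h1 : (i : ℕ) + 1 < m
  · rw [dif_pos h1]
    split_ifs <;> first | (exfalso; omega) | ring1
  · rw [dif_neg h1]
    split_ifs <;> first | (exfalso; omega) | ring1

/-- The Jordan-basis matrix `W` with `(Γ⁻ᵀΓ)W = W J_m(-1)`. -/
noncomputable def Wm (m : ℕ) : Matrix (Fin m) (Fin m) ℂ :=
  Matrix.of fun i t : Fin m => wf i t

lemma GW1 (m : ℕ) : Gamma m * Wm m =
    Matrix.of (fun i t : Fin m =>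
      (-1 : ℂ) ^ (m - 1 - (i : ℕ)) * (wf (m - 1 - (i : ℕ)) t + wf (m - (i : ℕ)) t)) := by
  ext i t
  have hi := i.isLt
  have ht := t.isLt
  rw [Matrix.mul_apply]
  have step : ∀ l : Fin m,
      Gamma m i l * Wm m l t =
        (if (l : ℕ) = m - 1 - (i : ℕ) then
          (-1 : ℂ) ^ (m - 1 - (i : ℕ)) * wf (l : ℕ) (t : ℕ) else 0) +
        (if (l : ℕ) = m - (i : ℕ) then
          (-1 : ℂ) ^ (m - 1 - (i : ℕ)) * wf (l : ℕ) (t : ℕ) else 0) := by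
    intro l
    have hl := l.isLt
    simp only [Gamma, Wm, Matrix.of_apply]
    split_ifs <;> first | ring1 | (exfalso; omega)
  rw [Finset.sum_congr rfl (fun l _ => step l), Finset.sum_add_distrib, sum_delta, sum_delta]
  rw [dif_pos (show m - 1 - (i : ℕ) < m by omega)]
  simp only [Matrix.of_apply]
  rcases Nat.eq_zero_or_pos (i : ℕ) with h0 | h0
  · rw [dif_neg (by omega), h0]
    rw [wf_zero (show (t : ℕ) < m - 0 by omega)]
    ring
  · rw [dif_pos (show m - (i : ℕ) < m by omega)]
    ring

lemma GW2 (m : ℕ) : (Gamma m)ᵀ * Wm m =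
    Matrix.of (fun i t : Fin m =>
      (-1 : ℂ) ^ (i : ℕ) * (wf (m - 1 - (i : ℕ)) t - wf (m - (i : ℕ)) t)) := by
  ext i t
  have hi := i.isLt
  have ht := t.isLt
  rw [Matrix.mul_apply]
  have step : ∀ l : Fin m,
      (Gamma m)ᵀ i l * Wm m l t =
        (if (l : ℕ) = m - 1 - (i : ℕ) then
          (-1 : ℂ) ^ (m - 1 - (l : ℕ)) * wf (l : ℕ) (t : ℕ) else 0) +
        (if (l : ℕ) = m - (i : ℕ) then
          (-1 : ℂ) ^ (m - 1 - (l : ℕ)) * wf (l : ℕ) (t : ℕ) else 0) := by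
    intro l
    have hl := l.isLt
    simp only [Gamma, Wm, Matrix.of_apply, Matrix.transpose_apply]
    split_ifs <;> first | ring1 | (exfalso; omega)
  rw [Finset.sum_congr rfl (fun l _ => step l), Finset.sum_add_distrib, sum_delta, sum_delta]
  rw [dif_pos (show m - 1 - (i : ℕ) < m by omega)]
  simp only [Matrix.of_apply]
  rw [show m - 1 - (m - 1 - (i : ℕ)) = (i : ℕ) by omega]
  rcases Nat.eq_zero_or_pos (i : ℕ) with h0 | h0
  · rw [dif_neg (by omega), h0]
    rw [wf_zero (show (t : ℕ) < m - 0 by omega)]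
    ring
  · rw [dif_pos (show m - (i : ℕ) < m by omega)]
    rw [show m - 1 - (m - (i : ℕ)) = (i : ℕ) - 1 by omega]
    obtain ⟨b, hb⟩ : ∃ b, (i : ℕ) = b + 1 := ⟨(i : ℕ) - 1, by omega⟩
    rw [hb, Nat.add_sub_cancel, pow_succ]
    ring

lemma GW3 (k : ℕ) (hk : 1 ≤ k) :
    (Gamma (2 * k))ᵀ * Wm (2 * k) * Jblock (2 * k) (-1) = Gamma (2 * k) * Wm (2 * k) := by
  rw [GW1, GW2]
  ext i t
  have hi := i.isLt
  have ht := t.isLt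
  rw [Matrix.mul_apply]
  have hsign : (-1 : ℂ) ^ (2 * k - 1 - (i : ℕ)) = -(-1 : ℂ) ^ (i : ℕ) := by
    have h1 : (-1 : ℂ) ^ (2 * k - 1 - (i : ℕ)) * (-1) ^ (i : ℕ) = -1 := by
      rw [← pow_add]
      exact Odd.neg_one_pow ⟨k - 1, by omega⟩
    have h2 : (-1 : ℂ) ^ (i : ℕ) * (-1) ^ (i : ℕ) = 1 := by
      rw [← pow_add]; exact Even.neg_one_pow ⟨(i : ℕ), rfl⟩
    calc (-1 : ℂ) ^ (2 * k - 1 - (i : ℕ))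
        = (-1 : ℂ) ^ (2 * k - 1 - (i : ℕ)) * ((-1) ^ (i : ℕ) * (-1) ^ (i : ℕ)) := by
          rw [h2, mul_one]
      _ = ((-1 : ℂ) ^ (2 * k - 1 - (i : ℕ)) * (-1) ^ (i : ℕ)) * (-1) ^ (i : ℕ) := by ring
      _ = -(-1 : ℂ) ^ (i : ℕ) := by rw [h1]; ring
  have hmi : 2 * k - (i : ℕ) = (2 * k - 1 - (i : ℕ)) + 1 := by omega
  set F : ℕ → ℂ := fun s =>
    (-1 : ℂ) ^ (i : ℕ) * (wf (2 * k - 1 - (i : ℕ)) s - wf (2 * k - (i : ℕ)) s) with hF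
  by_cases ht0 : (t : ℕ) = 0
  · have step : ∀ l : Fin (2 * k),
        (Matrix.of (fun i t : Fin (2 * k) =>
          (-1 : ℂ) ^ (i : ℕ) * (wf (2 * k - 1 - (i : ℕ)) t - wf (2 * k - (i : ℕ)) t))) i l *
          Jblock (2 * k) (-1) l t =
        (if (l : ℕ) = (t : ℕ) then -F (l : ℕ) else 0) := by
      intro l
      have hl := l.isLt
      simp only [Jblock, Matrix.of_apply, hF]
      split_ifs <;> first | ring1 | (exfalso; omega)
    rw [Finset.sum_congr rfl (fun l _ => step l), sum_delta, dif_pos ht]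
    simp only [Matrix.of_apply, hF, ht0, hmi]
    rw [hsign, show wf (2 * k - 1 - (i : ℕ) + 1) 0 = 0 by simp [wf]]
    ring
  · have step : ∀ l : Fin (2 * k),
        (Matrix.of (fun i t : Fin (2 * k) =>
          (-1 : ℂ) ^ (i : ℕ) * (wf (2 * k - 1 - (i : ℕ)) t - wf (2 * k - (i : ℕ)) t))) i l *
          Jblock (2 * k) (-1) l t =
        (if (l : ℕ) = (t : ℕ) then -F (l : ℕ) else 0) +
        (if (l : ℕ) = (t : ℕ) - 1 then F (l : ℕ) else 0) := by
      intro l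
      have hl := l.isLt
      simp only [Jblock, Matrix.of_apply, hF]
      split_ifs <;> first | ring1 | (exfalso; omega)
    rw [Finset.sum_congr rfl (fun l _ => step l), Finset.sum_add_distrib, sum_delta, sum_delta,
      dif_pos ht, dif_pos (show (t : ℕ) - 1 < 2 * k by omega)]
    simp only [Matrix.of_apply, hF, hmi]
    have h := wf_rec (2 * k - 1 - (i : ℕ)) (t : ℕ)
    rw [if_neg ht0] at h
    rw [hsign]
    linear_combination (-(-1 : ℂ) ^ (i : ℕ)) * h

lemma Wtri (m : ℕ) : BlockTriangular (Wm m) id := fun _ j h => wf_zero h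

lemma Wunit (m : ℕ) : IsUnit (Wm m) := by
  rw [Matrix.isUnit_iff_isUnit_det, Matrix.det_of_upperTriangular (Wtri m), isUnit_iff_ne_zero]
  refine Finset.prod_ne_zero_iff.mpr fun i _ => ?_
  rcases Nat.eq_zero_or_pos (i : ℕ) with h0 | h0
  · simp [Wm, wf, h0]
  · have hne : (i : ℕ) ≠ 0 := by omega
    simp only [Wm, Matrix.of_apply, wf, hne, if_false, Nat.choose_self, Nat.cast_one, mul_one]
    exact div_ne_zero (pow_ne_zero _ (by norm_num)) (pow_ne_zero _ (by norm_num))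

end H4kAux

open H4kAux in
/-- For every `k ≥ 1`, the matrix `H_{4k}(-1)` is congruent to `Γ_{2k} ⊕ Γ_{2k}`. -/
theorem H4k_congruent_Gamma2k_sq (k : ℕ) (hk : 1 ≤ k) :
    ∃ P : Matrix (Fin (2*k) ⊕ Fin (2*k)) (Fin (2*k) ⊕ Fin (2*k)) ℂ,
      IsUnit P ∧ Pᵀ * H (2*k) (-1) * P = Matrix.fromBlocks (Gamma (2*k)) 0 0 (Gamma (2*k)) := by
  have hWu : IsUnit (Wm (2 * k)) := Wunit (2 * k)
  have hWdet : IsUnit (Wm (2 * k)).det := (Matrix.isUnit_iff_isUnit_det _).mp hWu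
  set W : Matrix (Fin (2 * k)) (Fin (2 * k)) ℂ := Wm (2 * k) with hW
  set V : Matrix (Fin (2 * k)) (Fin (2 * k)) ℂ := (W⁻¹)ᵀ with hV
  set G : Matrix (Fin (2 * k)) (Fin (2 * k)) ℂ := Gamma (2 * k) with hG
  set D : Matrix (Fin (2 * k)) (Fin (2 * k)) ℂ := Dm (2 * k) with hD
  set Jb : Matrix (Fin (2 * k)) (Fin (2 * k)) ℂ := Jblock (2 * k) (-1) with hJb
  have hGD : G * D = 1 := GD (2 * k)
  have hGW : Gᵀ * W * Jb = G * W := GW3 k hk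
  have hWV : Wᵀ * V = 1 := by
    rw [hV, ← Matrix.transpose_mul, Matrix.nonsing_inv_mul W hWdet, Matrix.transpose_one]
  have hVT : Vᵀ = W⁻¹ := by rw [hV, Matrix.transpose_transpose]
  set Q : Matrix (Fin (2 * k) ⊕ Fin (2 * k)) (Fin (2 * k) ⊕ Fin (2 * k)) ℂ :=
    Matrix.fromBlocks W ((2 : ℂ)⁻¹ • (D * V)) (Complex.I • W)
      ((-(Complex.I * 2⁻¹)) • (D * V)) with hQ
  have hQT : Qᵀ = Matrix.fromBlocks Wᵀ (Complex.I • Wᵀ) ((2 : ℂ)⁻¹ • (D * V)ᵀ)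
      ((-(Complex.I * 2⁻¹)) • (D * V)ᵀ) := by
    rw [hQ, Matrix.fromBlocks_transpose]
    simp only [Matrix.transpose_smul]
  have key : Qᵀ * Matrix.fromBlocks G 0 0 G * Q = H (2 * k) (-1) := by
    rw [hQT, hQ, Matrix.fromBlocks_multiply, Matrix.fromBlocks_multiply, H]
    rw [Matrix.fromBlocks_inj]
    refine ⟨?_, ?_, ?_, ?_⟩
    · simp only [Matrix.smul_mul, Matrix.mul_smul, smul_smul, Matrix.mul_zero, Matrix.zero_mul,
        add_zero, zero_add, Complex.I_mul_I]
      rw [neg_one_smul]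
      exact add_neg_cancel _
    · simp only [Matrix.smul_mul, Matrix.mul_smul, smul_smul, Matrix.mul_zero, Matrix.zero_mul,
        add_zero, zero_add, Complex.I_mul_I]
      rw [show (-(Complex.I * 2⁻¹) * Complex.I) = (2⁻¹ : ℂ) from by
        linear_combination (-(2⁻¹ : ℂ)) * Complex.I_mul_I]
      rw [← add_smul, show ((2⁻¹ : ℂ) + 2⁻¹) = 1 by norm_num, one_smul]
      rw [Matrix.mul_assoc, ← Matrix.mul_assoc G D V, hGD, Matrix.one_mul]
      exact hWV
    · simp only [Matrix.smul_mul, Matrix.mul_smul, smul_smul, Matrix.mul_zero, Matrix.zero_mul,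
        add_zero, zero_add, Complex.I_mul_I]
      rw [show (Complex.I * -(Complex.I * 2⁻¹)) = (2⁻¹ : ℂ) from by
        linear_combination (-(2⁻¹ : ℂ)) * Complex.I_mul_I]
      rw [← add_smul, show ((2⁻¹ : ℂ) + 2⁻¹) = 1 by norm_num, one_smul]
      have hDGW : Dᵀ * (G * W) = W * Jb := by
        rw [← hGW, ← Matrix.mul_assoc, ← Matrix.mul_assoc, ← Matrix.transpose_mul, hGD,
          Matrix.transpose_one, Matrix.one_mul]
      rw [Matrix.transpose_mul]
      simp only [Matrix.mul_assoc]
      rw [hDGW, hVT, ← Matrix.mul_assoc, Matrix.nonsing_inv_mul W hWdet, Matrix.one_mul]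
    · simp only [Matrix.smul_mul, Matrix.mul_smul, smul_smul, Matrix.mul_zero, Matrix.zero_mul,
        add_zero, zero_add, Complex.I_mul_I]
      rw [← add_smul, show ((2⁻¹ * 2⁻¹ : ℂ) + -(Complex.I * 2⁻¹) * -(Complex.I * 2⁻¹)) = 0 from by
        linear_combination ((4 : ℂ)⁻¹) * Complex.I_mul_I, zero_smul]
  have hHdet : IsUnit (H (2 * k) (-1)).det := by
    apply Matrix.isUnit_det_of_right_inverse
      (B := Matrix.fromBlocks 0 (Jim (2 * k)) 1 0)
    rw [H, Matrix.fromBlocks_multiply]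
    simp only [Matrix.mul_zero, Matrix.zero_mul, Matrix.mul_one, Matrix.one_mul, add_zero,
      zero_add]
    rw [JJi (2 * k)]
    exact Matrix.fromBlocks_one
  have hQdet : IsUnit Q.det := by
    have hd := congrArg Matrix.det key
    rw [Matrix.det_mul, Matrix.det_mul, Matrix.det_transpose] at hd
    rw [← hd] at hHdet
    exact isUnit_of_mul_isUnit_left (isUnit_of_mul_isUnit_left hHdet)
  refine ⟨Q⁻¹, ?_, ?_⟩
  · exact Matrix.isUnit_nonsing_inv_iff.mpr ((Matrix.isUnit_iff_isUnit_det _).mpr hQdet)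
  · have h1 : (Qᵀ)⁻¹ * Qᵀ = 1 := Matrix.nonsing_inv_mul _ (by rwa [Matrix.det_transpose])
    have h2 : Q * Q⁻¹ = 1 := Matrix.mul_nonsing_inv _ hQdet
    rw [Matrix.transpose_nonsing_inv, ← key]
    calc (Qᵀ)⁻¹ * (Qᵀ * Matrix.fromBlocks G 0 0 G * Q) * Q⁻¹
        = ((Qᵀ)⁻¹ * Qᵀ) * Matrix.fromBlocks G 0 0 G * (Q * Q⁻¹) := by
          simp only [Matrix.mul_assoc]
      _ = Matrix.fromBlocks G 0 0 G := by rw [h1, h2, Matrix.one_mul, Matrix.mul_one]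
end

section
/- For every k ≥ 1, the cosquare of H_{4k}(-1) is block diagonal: H_{4k}(-1) is invertible and (H_{4k}(-1))⁻ᵀ H_{4k}(-1) = J_{2k}(-1) ⊕ (J_{2k}(-1))⁻ᵀ, where M⁻ᵀ denotes the transpose of the inverse of M. -/
open Matrix

lemma jblock_upper (n : ℕ) (μ : ℂ) : (Jblock n μ).BlockTriangular id := by
  intro i j h
  have h' : (j : ℕ) < (i : ℕ) := h
  simp only [Jblock, of_apply]
  rw [if_neg (by omega), if_neg (by omega)]

lemma jblock_det (n : ℕ) (μ : ℂ) : (Jblock n μ).det = μ ^ n := by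
  rw [Matrix.det_of_upperTriangular (jblock_upper n μ)]
  simp [Jblock]

/-- For every `k ≥ 1`, `H_{4k}(-1)` is invertible and its cosquare is block diagonal:
`(H_{4k}(-1))⁻ᵀ H_{4k}(-1) = J_{2k}(-1) ⊕ (J_{2k}(-1))⁻ᵀ`. -/
theorem cosquare_H4k (k : ℕ) (hk : 1 ≤ k) :
    IsUnit (H (2*k) (-1)) ∧
      ((H (2*k) (-1))⁻¹)ᵀ * H (2*k) (-1) =
        Matrix.fromBlocks (Jblock (2*k) (-1)) 0 0 (((Jblock (2*k) (-1))⁻¹)ᵀ) := by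
  set n := 2*k with hn
  set J := Jblock n (-1) with hJ
  have hdet : IsUnit J.det := by
    rw [hJ, jblock_det]
    exact (isUnit_iff_ne_zero.mpr (by simp)).pow n
  have hJi : J * J⁻¹ = 1 := Matrix.mul_nonsing_inv _ hdet
  have hHinv : H n (-1) * Matrix.fromBlocks 0 J⁻¹ 1 0 = 1 := by
    simp [H, Matrix.fromBlocks_multiply, hJi, ← Matrix.fromBlocks_one, ← hJ]
  refine ⟨⟨⟨_, _, hHinv, mul_eq_one_comm.mp hHinv⟩, rfl⟩, ?_⟩
  rw [Matrix.inv_eq_right_inv hHinv]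
  simp [H, Matrix.fromBlocks_transpose, Matrix.fromBlocks_multiply, ← hJ]
end
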